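/- The bms₃ bracket defined on pairs of smooth functions on the circle by [(f₁,Y₁),(f₂,Y₂)] = (f̂, Ŷ) with Ŷ = Y₁ ∂_φ Y₂ − Y₂ ∂_φ Y₁ − (α/l²)(f₁ ∂_φ f₂ − f₂ ∂_φ f₁) and f̂ = Y₁ ∂_φ f₂ − Y₂ ∂_φ f₁ + f₁ ∂_φ Y₂ − f₂ ∂_φ Y₁ satisfies the Jacobi identity for any real constants α, l ≠ 0, hence defines a Lie algebra. -/

import Mathlib

open Real

/-- The bms₃ bracket on pairs `(f, Y)` of functions of the angle `φ`:
`Ŷ = Y₁ ∂Y₂ − Y₂ ∂Y₁ − (α/l²)(f₁ ∂f₂ − f₂ ∂f₁)`,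
`f̂ = Y₁ ∂f₂ − Y₂ ∂f₁ + f₁ ∂Y₂ − f₂ ∂Y₁`. -/
noncomputable def brBMS3 (α l : ℝ) (p q : (ℝ → ℝ) × (ℝ → ℝ)) :
    (ℝ → ℝ) × (ℝ → ℝ) :=
  (p.2 * deriv q.1 - q.2 * deriv p.1 + p.1 * deriv q.2 - q.1 * deriv p.2,
   p.2 * deriv q.2 - q.2 * deriv p.2
     - (α / l ^ 2) • (p.1 * deriv q.1 - q.1 * deriv p.1))

/-- For any real constants `α` and `l ≠ 0`, the bms₃ bracket on pairs of
smooth `2π`-periodic functions satisfies the Jacobi identity, hence defines a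
Lie algebra. -/
theorem stmt_13 (α l : ℝ) (hl : l ≠ 0) :
    ∀ p₁ p₂ p₃ : (ℝ → ℝ) × (ℝ → ℝ),
      ContDiff ℝ (⊤ : ℕ∞) p₁.1 → ContDiff ℝ (⊤ : ℕ∞) p₁.2 →
      ContDiff ℝ (⊤ : ℕ∞) p₂.1 → ContDiff ℝ (⊤ : ℕ∞) p₂.2 →
      ContDiff ℝ (⊤ : ℕ∞) p₃.1 → ContDiff ℝ (⊤ : ℕ∞) p₃.2 →
      Function.Periodic p₁.1 (2 * π) → Function.Periodic p₁.2 (2 * π) →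
      Function.Periodic p₂.1 (2 * π) → Function.Periodic p₂.2 (2 * π) →
      Function.Periodic p₃.1 (2 * π) → Function.Periodic p₃.2 (2 * π) →
      brBMS3 α l (brBMS3 α l p₁ p₂) p₃ + brBMS3 α l (brBMS3 α l p₂ p₃) p₁
        + brBMS3 α l (brBMS3 α l p₃ p₁) p₂ = 0 := by
  rintro ⟨f₁, Y₁⟩ ⟨f₂, Y₂⟩ ⟨f₃, Y₃⟩ hf₁ hY₁ hf₂ hY₂ hf₃ hY₃ _ _ _ _ _ _
  simp only at hf₁ hY₁ hf₂ hY₂ hf₃ hY₃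
  have D : ∀ f : ℝ → ℝ, ContDiff ℝ (⊤ : ℕ∞) f →
      Differentiable ℝ f ∧ Differentiable ℝ (deriv f) := by
    intro f hf
    have h := contDiff_infty_iff_deriv.mp (hf.of_le (by simp))
    exact ⟨h.1, h.2.differentiable (by simp)⟩
  obtain ⟨df₁, df₁'⟩ := D f₁ hf₁
  obtain ⟨dY₁, dY₁'⟩ := D Y₁ hY₁
  obtain ⟨df₂, df₂'⟩ := D f₂ hf₂
  obtain ⟨dY₂, dY₂'⟩ := D Y₂ hY₂
  obtain ⟨df₃, df₃'⟩ := D f₃ hf₃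
  obtain ⟨dY₃, dY₃'⟩ := D Y₃ hY₃
  simp only [brBMS3, Prod.mk_add_mk, Prod.ext_iff]
  constructor <;> funext x <;>
    simp only [Pi.add_apply, Pi.sub_apply, Pi.mul_apply, Pi.smul_apply,
      smul_eq_mul, Pi.zero_apply, Pi.mul_def, Pi.sub_def, Pi.add_def,
      Pi.smul_def] <;>
    simp (disch := fun_prop) only [deriv_add, deriv_sub, deriv_mul, deriv_fun_add, deriv_fun_sub, deriv_fun_mul,
      deriv_const_mul, smul_eq_mul, deriv_const', Prod.fst_zero, Prod.snd_zero, Pi.zero_apply, mul_zero, zero_mul] <;>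
    ring
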